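/- For every positive integer k, the generating function identity (1 - X^k) · Σ_{m ≥ 0} Q_k(m) X^m = X^k · Σ_{m ≥ 0} P(m) X^m holds in the ring of formal power series over the integers, where P(0) = 1 and Q_k(0) = 0. -/

import Mathlib

/-!
Removing one part `k` is a bijection from the partitions of `n` that contain `k` onto the
partitions of `n - k`, and it lowers the multiplicity of `k` by one. Hence
`Q k n = Q k (n - k) + P (n - k)` for `k ≤ n`, while `Q k n = 0` for `n < k`, which is the identity
compared coefficientwise.
-/

/-- Number of unordered partitions of `n` (so `P 0 = 1`, via the empty partition). -/
def P (n : ℕ) : ℕ := Fintype.card (Nat.Partition n)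

/-- Total number of occurrences of `k`, counted with multiplicity,
among all unordered partitions of `n` (so `Q k 0 = 0`). -/
def Q (k n : ℕ) : ℕ := ∑ p : Nat.Partition n, p.parts.count k

/-- Sum over all unordered partitions of `n` of the number of distinct parts. -/
def S (n : ℕ) : ℕ := ∑ p : Nat.Partition n, p.parts.toFinset.card

/-- Number of unordered partitions of `n` containing `k` as a part. -/
def R (k n : ℕ) : ℕ := (Finset.univ.filter (fun p : Nat.Partition n => k ∈ p.parts)).card

namespace PowerSeries

variable {A : Type*} [CommRing A]

theorem one_sub_X_pow_mul_mk_eq_X_pow_mul_mk {k : ℕ} {f g : ℕ → A}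
    (hlt : ∀ n < k, f n = 0) (hge : ∀ n, k ≤ n → f n = f (n - k) + g (n - k)) :
    (1 - X ^ k) * mk f = X ^ k * mk g := by
  ext n
  rw [sub_mul, one_mul, map_sub, coeff_X_pow_mul', coeff_X_pow_mul', coeff_mk]
  split_ifs with hkn
  · simp only [coeff_mk, hge n hkn, add_sub_cancel_left]
  · simp [hlt n (not_le.1 hkn)]

end PowerSeries

theorem Q_eq_zero_of_lt {k n : ℕ} (h : n < k) : Q k n = 0 :=
  Finset.sum_eq_zero fun _ _ =>
    Multiset.count_eq_zero.2 fun hk => (Nat.Partition.le_of_mem_parts hk).not_gt h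

theorem Q_eq_Q_sub_add_P_sub {k n : ℕ} (hk : 1 ≤ k) (hkn : k ≤ n) :
    Q k n = Q k (n - k) + P (n - k) := by
  classical
  have hnot : ∑ p : {p : n.Partition // k ∉ p.parts}, p.1.parts.count k = 0 :=
    Finset.sum_eq_zero fun p _ => Multiset.count_eq_zero.2 p.2
  calc Q k n = ∑ p : {p : n.Partition // k ∈ p.parts}, p.1.parts.count k := by
        rw [Q, ← Fintype.sum_subtype_add_sum_subtype (fun p : n.Partition => k ∈ p.parts), hnot,
          add_zero]
    _ = ∑ q : (n - k).Partition, (k ::ₘ q.parts).count k :=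
        ((Nat.Partition.partitionWithPartEquiv hk hkn).symm.sum_comp _).symm
    _ = Q k (n - k) + P (n - k) := by
        simp [Q, P, Finset.sum_add_distrib]

theorem Q_generating_function (k : ℕ) (hk : 0 < k) :
    (1 - PowerSeries.X ^ k) * PowerSeries.mk (fun m => (Q k m : ℤ))
      = PowerSeries.X ^ k * PowerSeries.mk (fun m => (P m : ℤ)) :=
  PowerSeries.one_sub_X_pow_mul_mk_eq_X_pow_mul_mk
    (fun _ h => by exact_mod_cast Q_eq_zero_of_lt h)
    (fun _ h => by exact_mod_cast Q_eq_Q_sub_add_P_sub hk h)
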